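/- Let n ≥ 1, m ≥ n, and α := (1/(2·384·744)) · (n/m). Let x : [n] → ℕ be a load vector with Σ_{i=1}^n x_i = m, let κ := |{i ∈ [n] : x_i > 0}| and f := (n − κ)/n. Let Z_1, …, Z_κ be independent random variables, each uniformly distributed on [n], and define x'_i := x_i − 1_{x_i > 0} + Σ_{j=1}^{κ} 1_{Z_j = i}. Let Φ := Σ_{i=1}^n e^{α x_i} and Φ' := Σ_{i=1}^n e^{α x'_i}. Then E[Φ'] ≤ Φ · e^{α² − α·f} + 6n; and moreover if Φ > (48/α²) · n, then E[Φ'] ≤ Φ · e^{1.5·α² − α·f}. -/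

import Mathlib

open MeasureTheory ProbabilityTheory Finset
open scoped ENNReal

/-- The number of non-empty bins of a load vector. -/
def kappa {n : ℕ} (x : Fin n → ℕ) : ℕ := (Finset.univ.filter fun i => 0 < x i).card

/-!
Bin `i` receives `h_i = Σ_j 1_{Z_j = i} ~ Binomial(κ, 1/n)` of the re-allocated balls, so
`E[e^{α h_i}] = (1 + (e^α - 1)/n)^κ`, while removing a ball from a non-empty bin multiplies its
term by `e^{-α}` and leaves the term `1` of an empty bin alone. Hence
`E[Φ'] = (1 + (e^α - 1)/n)^κ · (e^{-α} Φ + (1 - e^{-α}) n f)`. Since `κ = (1 - f) n` and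
`e^α - 1 ≤ α + α²`, the power is at most `e^{α + α² - α f}`, which gives
`E[Φ'] ≤ e^{α² - α f} (Φ + (e^α - 1) n f) ≤ e^{α² - α f} (Φ + n)`. The additive `n` costs at most
`6n`, and it is absorbed by the factor `e^{α²/2} ≥ 1 + α²/2` as soon as `Φ ≥ 2n/α²`.
-/

open Real

namespace ProbabilityTheory

variable {Ω ι β : Type*}

lemma exp_mul_indicator_one (A : Set Ω) (t : ℝ) :
    (fun ω => exp (t * A.indicator 1 ω)) = fun ω => A.indicator (fun _ => exp t - 1) ω + 1 := by
  ext ω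
  by_cases hω : ω ∈ A <;> simp [hω]

lemma card_filter_eq_sum_indicator [Fintype ι] [DecidableEq β] (W : ι → Ω → β) (b : β) :
    (fun ω => (#{j | W j ω = b} : ℝ)) = ∑ j, {ω | W j ω = b}.indicator 1 := by
  ext ω
  simp [Finset.sum_apply, Set.indicator_apply]

variable [MeasurableSpace Ω] {P : Measure Ω}

lemma iIndepFun.indicator_preimage_singleton [MeasurableSpace β] [MeasurableSingletonClass β]
    {W : ι → Ω → β} (hindep : iIndepFun W P) (b : β) :
    iIndepFun (fun j => {ω | W j ω = b}.indicator (1 : Ω → ℝ)) P :=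
  hindep.comp (fun _ => ({b} : Set β).indicator 1) fun _ =>
    measurable_one.indicator (measurableSet_singleton b)

variable [IsProbabilityMeasure P]

lemma integrable_exp_mul_indicator_one {A : Set Ω} (hA : MeasurableSet A) (t : ℝ) :
    Integrable (fun ω => exp (t * A.indicator 1 ω)) P := by
  rw [exp_mul_indicator_one]
  exact ((integrable_const _).indicator hA).add (integrable_const 1)

lemma mgf_indicator_one {A : Set Ω} (hA : MeasurableSet A) (t : ℝ) :
    mgf (A.indicator 1) P t = 1 + P.real A * (exp t - 1) := by
  rw [mgf, exp_mul_indicator_one, integral_add ((integrable_const _).indicator hA)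
    (integrable_const 1), integral_indicator_const _ hA]
  simp only [smul_eq_mul, integral_const, probReal_univ]
  ring

variable [Fintype ι] [DecidableEq β] [MeasurableSpace β] [MeasurableSingletonClass β]
  {W : ι → Ω → β} {p : ℝ}

theorem iIndepFun.integrable_exp_mul_card_filter (hmeas : ∀ j, Measurable (W j))
    (hindep : iIndepFun W P) (b : β) (t : ℝ) :
    Integrable (fun ω => exp (t * #{j | W j ω = b})) P := by
  have hA : ∀ j, MeasurableSet {ω | W j ω = b} := fun j => hmeas j (measurableSet_singleton b)
  have h := (hindep.indicator_preimage_singleton b).integrable_exp_mul_sum (t := t) (s := univ)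
    (fun j => measurable_one.indicator (hA j))
    fun j _ => integrable_exp_mul_indicator_one (hA j) t
  rwa [← card_filter_eq_sum_indicator] at h

theorem iIndepFun.mgf_card_filter_eq (hmeas : ∀ j, Measurable (W j)) (hindep : iIndepFun W P)
    {b : β} (hp : ∀ j, P.real {ω | W j ω = b} = p) (t : ℝ) :
    mgf (fun ω => (#{j | W j ω = b} : ℝ)) P t = (1 + p * (exp t - 1)) ^ Fintype.card ι := by
  have hA : ∀ j, MeasurableSet {ω | W j ω = b} := fun j => hmeas j (measurableSet_singleton b)
  rw [card_filter_eq_sum_indicator,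
    (hindep.indicator_preimage_singleton b).mgf_sum (fun j => measurable_one.indicator (hA j))]
  simp [mgf_indicator_one (hA _), hp]

theorem iIndepFun.integral_sum_exp_mul_add_card_filter [Fintype β]
    (hmeas : ∀ j, Measurable (W j)) (hindep : iIndepFun W P)
    (hp : ∀ j b, P.real {ω | W j ω = b} = p) (t : ℝ) (y : β → ℝ) :
    ∫ ω, ∑ b, exp (t * (y b + #{j | W j ω = b})) ∂P
      = (1 + p * (exp t - 1)) ^ Fintype.card ι * ∑ b, exp (t * y b) := by
  simp_rw [mul_add, exp_add]
  rw [integral_finsetSum _ fun b _ =>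
      (hindep.integrable_exp_mul_card_filter hmeas b t).const_mul _, mul_sum]
  refine sum_congr rfl fun b _ => ?_
  rw [integral_const_mul, mul_comm]
  exact congrArg (· * _) (hindep.mgf_card_filter_eq hmeas (hp · b) t)

end ProbabilityTheory

lemma exp_sub_one_le_self_add_sq {t : ℝ} (ht : |t| ≤ 1) : exp t - 1 ≤ t + t ^ 2 := by
  linarith [le_abs_self (exp t - 1 - t), abs_exp_sub_one_sub_id_le ht]

lemma one_add_inv_mul_exp_sub_one_pow_le {n κ : ℕ} (hn : 0 < n) (hκ : κ ≤ n) {t : ℝ}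
    (ht0 : 0 ≤ t) (ht1 : t ≤ 1) :
    (1 + (n : ℝ)⁻¹ * (exp t - 1)) ^ κ ≤ exp (t + t ^ 2 - t * (((n - κ : ℕ) : ℝ) / n)) := by
  have hexp := exp_sub_one_le_self_add_sq (abs_le.2 ⟨by linarith, ht1⟩)
  have hexp0 : 0 ≤ exp t - 1 := sub_nonneg.2 (one_le_exp ht0)
  have hn0 : (0 : ℝ) < n := by exact_mod_cast hn
  have hfrac : (κ : ℝ) * (n : ℝ)⁻¹ = 1 - ((n - κ : ℕ) : ℝ) / n := by
    rw [Nat.cast_sub hκ]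
    field_simp
    ring
  have hf0 : 0 ≤ ((n - κ : ℕ) : ℝ) / n := by positivity
  have hf1 : ((n - κ : ℕ) : ℝ) / n ≤ 1 := by
    rw [div_le_one hn0]
    exact_mod_cast Nat.sub_le n κ
  calc (1 + (n : ℝ)⁻¹ * (exp t - 1)) ^ κ ≤ exp ((n : ℝ)⁻¹ * (exp t - 1)) ^ κ := by
        gcongr
        linarith [add_one_le_exp ((n : ℝ)⁻¹ * (exp t - 1))]
    _ = exp ((1 - ((n - κ : ℕ) : ℝ) / n) * (exp t - 1)) := by
        rw [← exp_nat_mul, ← mul_assoc, hfrac]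
    _ ≤ exp (t + t ^ 2 - t * (((n - κ : ℕ) : ℝ) / n)) := by
        refine exp_le_exp.2 ?_
        nlinarith [mul_le_mul_of_nonneg_left hexp (sub_nonneg.2 hf1), mul_nonneg hf0 (sq_nonneg t)]

lemma kappa_add_card_filter_eq_zero {n : ℕ} (x : Fin n → ℕ) : kappa x + #{i | x i = 0} = n := by
  simpa [kappa, Nat.pos_iff_ne_zero] using
    card_filter_add_card_filter_not (s := univ) (fun i => 0 < x i)

lemma kappa_le {n : ℕ} (x : Fin n → ℕ) : kappa x ≤ n := by
  have := kappa_add_card_filter_eq_zero x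
  omega

lemma exp_mul_sub_ite_pos (t : ℝ) (k : ℕ) :
    exp (t * ((k - if 0 < k then 1 else 0 : ℕ) : ℝ))
      = exp (-t) * exp (t * k) + (1 - exp (-t)) * if k = 0 then 1 else 0 := by
  rcases Nat.eq_zero_or_pos k with rfl | hk
  · simp
  · rw [if_pos hk, if_neg hk.ne', Nat.cast_sub hk, ← exp_add]
    push_cast
    ring_nf

lemma sum_exp_mul_sub_ite_pos {n : ℕ} (x : Fin n → ℕ) (t : ℝ) :
    ∑ i, exp (t * ((x i - if 0 < x i then 1 else 0 : ℕ) : ℝ))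
      = exp (-t) * ∑ i, exp (t * x i) + (1 - exp (-t)) * ((n - kappa x : ℕ) : ℝ) := by
  have hzero : #{i | x i = 0} = n - kappa x := by
    have := kappa_add_card_filter_eq_zero x
    omega
  simp_rw [exp_mul_sub_ite_pos, sum_add_distrib, ← mul_sum, sum_boole, hzero]

lemma add_le_mul_exp_half_sq {a Φ n : ℝ} (hΦ : 0 ≤ Φ) (h : 2 * n ≤ a ^ 2 * Φ) :
    Φ + n ≤ Φ * exp (a ^ 2 / 2) := by
  nlinarith [add_one_le_exp (a ^ 2 / 2)]

theorem integral_sum_exp_after_round_le {Ω : Type*} [MeasurableSpace Ω] {P : Measure Ω}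
    [IsProbabilityMeasure P] {n : ℕ} (hn : 0 < n) (x : Fin n → ℕ)
    {Z : Fin (kappa x) → Ω → Fin n} (hmeas : ∀ j, Measurable (Z j)) (hindep : iIndepFun Z P)
    (hunif : ∀ j i, P {ω | Z j ω = i} = (n : ℝ≥0∞)⁻¹) {α : ℝ} (hα0 : 0 ≤ α) (hα1 : α ≤ 1 / 2) :
    ∫ ω, ∑ i, exp (α * ((x i - (if 0 < x i then 1 else 0) + #{j | Z j ω = i} : ℕ) : ℝ)) ∂P
      ≤ exp (α ^ 2 - α * (((n - kappa x : ℕ) : ℝ) / n)) * (∑ i, exp (α * x i) + n) := by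
  have hp : ∀ j i, P.real {ω | Z j ω = i} = (n : ℝ)⁻¹ := by simp [measureReal_def, hunif]
  have hround := hindep.integral_sum_exp_mul_add_card_filter hmeas hp α
    fun i => ((x i - if 0 < x i then 1 else 0 : ℕ) : ℝ)
  rw [Fintype.card_fin, sum_exp_mul_sub_ite_pos] at hround
  simp only [Nat.cast_add]
  rw [hround]
  have hD : ((n - kappa x : ℕ) : ℝ) ≤ n := by exact_mod_cast Nat.sub_le n (kappa x)
  set D : ℝ := ((n - kappa x : ℕ) : ℝ)
  have hexp1 : exp α - 1 ≤ 1 := by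
    nlinarith [exp_sub_one_le_self_add_sq (abs_le.2 ⟨by linarith, by linarith⟩ : |α| ≤ 1)]
  have hexpneg : 0 ≤ 1 - exp (-α) := sub_nonneg.2 (exp_le_one_iff.2 (by linarith))
  calc _ ≤ exp (α + α ^ 2 - α * (D / n))
          * (exp (-α) * ∑ i, exp (α * x i) + (1 - exp (-α)) * D) := by
        gcongr
        exact one_add_inv_mul_exp_sub_one_pow_le hn (kappa_le x) hα0 (by linarith)
    _ = exp (α ^ 2 - α * (D / n)) * (∑ i, exp (α * x i) + (exp α - 1) * D) := by
        rw [show α + α ^ 2 - α * (D / n) = α + (α ^ 2 - α * (D / n)) by ring, exp_add,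
          exp_neg]
        field_simp
    _ ≤ exp (α ^ 2 - α * (D / n)) * (∑ i, exp (α * x i) + n) := by
        gcongr
        nlinarith [(Nat.cast_nonneg _ : (0 : ℝ) ≤ D)]

theorem rbb_exp_potential_drop_general
    (n m : ℕ) (hn : 1 ≤ n) (hm : n ≤ m)
    (x : Fin n → ℕ)
    (Ω : Type) [MeasurableSpace Ω] (P : Measure Ω) [IsProbabilityMeasure P]
    (Z : Fin (kappa x) → Ω → Fin n)
    (hmeas : ∀ j, Measurable (Z j))
    (hindep : iIndepFun Z P)
    (hunif : ∀ j i, P {ω | Z j ω = i} = (n : ℝ≥0∞)⁻¹) :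
    (let α : ℝ := (1 / (2 * 384 * 744)) * ((n : ℝ) / m)
     let f : ℝ := ((n - kappa x : ℕ) : ℝ) / n
     let Φ : ℝ := ∑ i, Real.exp (α * (x i : ℝ))
     let Φ' : Ω → ℝ := fun ω => ∑ i, Real.exp (α * ((x i - (if 0 < x i then 1 else 0)
        + (Finset.univ.filter fun j => Z j ω = i).card : ℕ) : ℝ))
     (∫ ω, Φ' ω ∂P) ≤ Φ * Real.exp (α ^ 2 - α * f) + 6 * n
       ∧ ((48 / α ^ 2) * n < Φ →
            (∫ ω, Φ' ω ∂P) ≤ Φ * Real.exp (1.5 * α ^ 2 - α * f))) := by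
  intro α f Φ Φ'
  have hn0 : (0 : ℝ) < n := by exact_mod_cast hn
  have hnm : (n : ℝ) / m ≤ 1 := div_le_one_of_le₀ (by exact_mod_cast hm) (Nat.cast_nonneg m)
  have hα0 : 0 < α := mul_pos (by norm_num) (div_pos hn0 (hn0.trans_le (by exact_mod_cast hm)))
  have hα1 : α ≤ 1 / 2 := by simp only [α]; linarith
  have hf0 : 0 ≤ f := by positivity
  have hmean : ∫ ω, Φ' ω ∂P ≤ exp (α ^ 2 - α * f) * (Φ + n) :=
    integral_sum_exp_after_round_le hn x hmeas hindep hunif hα0.le hα1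
  refine ⟨?_, fun hΦ => ?_⟩
  · have hG : exp (α ^ 2 - α * f) ≤ 6 :=
      calc exp (α ^ 2 - α * f) ≤ exp 1 := exp_le_exp.2 (by nlinarith)
        _ ≤ 6 := by linarith [exp_one_lt_d9]
    nlinarith
  · rw [div_mul_eq_mul_div, div_lt_iff₀ (by positivity)] at hΦ
    have hΦ0 : 0 ≤ Φ := by positivity
    calc ∫ ω, Φ' ω ∂P ≤ exp (α ^ 2 - α * f) * (Φ + n) := hmean
      _ ≤ exp (α ^ 2 - α * f) * (Φ * exp (α ^ 2 / 2)) := by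
        gcongr
        exact add_le_mul_exp_half_sq hΦ0 (by linarith)
      _ = Φ * exp (1.5 * α ^ 2 - α * f) := by
        rw [mul_left_comm, ← exp_add]
        ring_nf

/-- **Lemma 4.10 (exponential potential drop).** Let `x : [n] → ℕ` be a load vector with
`m ≥ n` balls, `κ` non-empty bins, fraction `f := (n-κ)/n` of empty bins, and let
`α := (1/(2·384·744))·(n/m)`. If one ball is removed from each non-empty bin and
re-allocated to a bin chosen independently and uniformly at random, then
`E[Φ'] ≤ Φ·e^{α² - α·f} + 6n`; moreover, if `Φ > (48/α²)·n`, then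
`E[Φ'] ≤ Φ·e^{1.5·α² - α·f}`. -/
theorem rbb_exp_potential_drop
    (n m : ℕ) (hn : 1 ≤ n) (hm : n ≤ m)
    (x : Fin n → ℕ) (hx : (∑ i, x i) = m)
    (Ω : Type) [MeasurableSpace Ω] (P : Measure Ω) [IsProbabilityMeasure P]
    (Z : Fin (kappa x) → Ω → Fin n)
    (hmeas : ∀ j, Measurable (Z j))
    (hindep : iIndepFun Z P)
    (hunif : ∀ j i, P {ω | Z j ω = i} = (n : ℝ≥0∞)⁻¹) :
    (let α : ℝ := (1 / (2 * 384 * 744)) * ((n : ℝ) / m)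
     let f : ℝ := ((n - kappa x : ℕ) : ℝ) / n
     let Φ : ℝ := ∑ i, Real.exp (α * (x i : ℝ))
     let Φ' : Ω → ℝ := fun ω => ∑ i, Real.exp (α * ((x i - (if 0 < x i then 1 else 0)
        + (Finset.univ.filter fun j => Z j ω = i).card : ℕ) : ℝ))
     (∫ ω, Φ' ω ∂P) ≤ Φ * Real.exp (α ^ 2 - α * f) + 6 * n
       ∧ ((48 / α ^ 2) * n < Φ →
            (∫ ω, Φ' ω ∂P) ≤ Φ * Real.exp (1.5 * α ^ 2 - α * f))) :=
  rbb_exp_potential_drop_general n m hn hm x Ω P Z hmeas hindep hunif
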